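/- Let n ≥ 1 and let Σ ⊆ ℝ^{n+1} be a Borel set with μ_Σ the n-dimensional Hausdorff measure restricted to Σ. Then: (i) for every x₀ ∈ ℝ^{n+1} and R > 0, μ_Σ(B_R(x₀)) ≤ e^{1/4}·(4π)^{n/2}·λ(Σ)·Rⁿ; and (ii) there is a constant C_n depending only on n such that if V > 0 satisfies μ_Σ(B_R(x₀)) ≤ V·Rⁿ for all x₀ ∈ ℝ^{n+1} and all R > 0, then λ(Σ) ≤ C_n·V. -/

import Mathlib

/-! Both bounds compare the Gaussian weight `exp (-|x - x₀|² / 4t)` with indicators of balls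
about `x₀`. On `B_R(x₀)` with `t = R²` the weight is at least `e^{-1/4}`, so a single Gaussian
integral controls the area of that ball. Conversely, with `r = √(4t)` the weight is pointwise at
most `∑ₖ e^{-k²} 1_{B_{(k+1)r}(x₀)}` (take `k = ⌊|x - x₀| / r⌋`); integrating against area bounds
on these balls gives at most `V rⁿ ∑ₖ (k+1)ⁿ e^{-k²}`, and `rⁿ = (4t)^{n/2}` cancels the
normalisation up to the factor `π^{-n/2}`. -/

noncomputable section
open Real MeasureTheory
open scoped ENNReal

/-- The Gaussian surface integral `F_{x₀,t₀}(Σ)`, computed against the `n`-dimensional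
Hausdorff measure restricted to a set `S ⊆ ℝ^{n+1}`, with values in `[0,∞]`. -/
def gaussianF (n : ℕ) (S : Set (EuclideanSpace ℝ (Fin (n+1))))
    (x₀ : EuclideanSpace ℝ (Fin (n+1))) (t₀ : ℝ) : ℝ≥0∞ :=
  ENNReal.ofReal ((4 * π * t₀) ^ (-(n:ℝ)/2)) *
    ∫⁻ x in S, ENNReal.ofReal (Real.exp (-‖x - x₀‖ ^ 2 / (4 * t₀))) ∂μH[(n:ℝ)]

/-- The entropy `λ(Σ) = sup_{x₀, t₀>0} F_{x₀,t₀}(Σ)`. -/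
def entropy (n : ℕ) (S : Set (EuclideanSpace ℝ (Fin (n+1)))) : ℝ≥0∞ :=
  ⨆ (x₀ : EuclideanSpace ℝ (Fin (n+1))) (t₀ : ℝ) (_ : 0 < t₀), gaussianF n S x₀ t₀

lemma summable_succ_pow_mul_exp_neg_sq (n : ℕ) :
    Summable fun k : ℕ => ((k:ℝ) + 1) ^ n * exp (-(k:ℝ) ^ 2) := by
  have hshift : Summable fun k : ℕ => ((k:ℝ) + 1) ^ n * exp (-1 * ((k:ℝ) + 1)) := by
    simpa using (summable_nat_add_iff 1).mpr (summable_pow_mul_exp_neg_nat_mul n one_pos)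
  refine (hshift.mul_left (exp 1)).of_nonneg_of_le (fun k => by positivity) fun k => ?_
  have hk : (k:ℝ) ≤ (k:ℝ) ^ 2 := by exact_mod_cast Nat.le_self_pow two_ne_zero k
  calc ((k:ℝ) + 1) ^ n * exp (-(k:ℝ) ^ 2) ≤ ((k:ℝ) + 1) ^ n * exp (1 + -1 * ((k:ℝ) + 1)) := by
        gcongr; linarith
    _ = exp 1 * (((k:ℝ) + 1) ^ n * exp (-1 * ((k:ℝ) + 1))) := by rw [exp_add]; ring

def gaussianShellSum (n : ℕ) : ℝ :=
  ∑' k : ℕ, ((k:ℝ) + 1) ^ n * exp (-(k:ℝ) ^ 2)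

lemma rpow_neg_half_mul_sq (n : ℕ) {a r : ℝ} (ha : 0 ≤ a) (hr : 0 ≤ r) :
    (a * r ^ 2) ^ (-(n:ℝ) / 2) = (a ^ ((n:ℝ) / 2) * r ^ n)⁻¹ := by
  rw [neg_div, rpow_neg (by positivity), mul_rpow ha (by positivity), ← rpow_natCast r 2,
    ← rpow_mul hr, show ((2:ℕ):ℝ) * (n / 2) = n by push_cast; ring, rpow_natCast]

section BallsAndGaussians

variable {E : Type*} [SeminormedAddCommGroup E] (x₀ : E)

lemma exp_neg_sq_le_tsum_indicator_ball {r : ℝ} (hr : 0 < r) (x : E) :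
    ENNReal.ofReal (exp (-‖x - x₀‖ ^ 2 / r ^ 2))
      ≤ ∑' k : ℕ, (Metric.ball x₀ (((k:ℝ) + 1) * r)).indicator
          (fun _ => ENNReal.ofReal (exp (-(k:ℝ) ^ 2))) x := by
  set k := ⌊‖x - x₀‖ / r⌋₊
  have hk : (k:ℝ) * r ≤ ‖x - x₀‖ := (le_div_iff₀ hr).mp (Nat.floor_le (by positivity))
  have hx : x ∈ Metric.ball x₀ (((k:ℝ) + 1) * r) := by
    rw [Metric.mem_ball, dist_eq_norm, ← div_lt_iff₀ hr]
    exact Nat.lt_floor_add_one _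
  refine le_trans ?_ (ENNReal.le_tsum k)
  rw [Set.indicator_of_mem hx]
  refine ENNReal.ofReal_le_ofReal (exp_le_exp.mpr ?_)
  rw [neg_div, neg_le_neg_iff, le_div_iff₀ (by positivity), ← mul_pow]
  gcongr

variable [MeasurableSpace E] [OpensMeasurableSpace E] (μ : Measure E)

lemma exp_neg_quarter_mul_measure_ball_le_lintegral {R : ℝ} (hR : 0 < R) :
    ENNReal.ofReal (exp (-(1/4))) * μ (Metric.ball x₀ R)
      ≤ ∫⁻ x, ENNReal.ofReal (exp (-‖x - x₀‖ ^ 2 / (4 * R ^ 2))) ∂μ := by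
  have hmeas : Measurable fun x => ENNReal.ofReal (exp (-‖x - x₀‖ ^ 2 / (4 * R ^ 2))) :=
    (ENNReal.continuous_ofReal.comp (by fun_prop)).measurable
  refine le_trans ?_ (mul_meas_ge_le_lintegral₀ hmeas.aemeasurable (ENNReal.ofReal (exp (-(1/4)))))
  gcongr
  intro x hx
  have hxR : ‖x - x₀‖ ^ 2 ≤ R ^ 2 := by
    rw [Metric.mem_ball, dist_eq_norm] at hx
    gcongr
  refine ENNReal.ofReal_le_ofReal (exp_le_exp.mpr ?_)
  rw [neg_div, neg_le_neg_iff, div_le_iff₀ (by positivity)]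
  linarith

lemma lintegral_exp_neg_sq_le_of_measure_ball_le (n : ℕ) {V r : ℝ} (hV : 0 ≤ V) (hr : 0 < r)
    (hball : ∀ R : ℝ, 0 < R → μ (Metric.ball x₀ R) ≤ ENNReal.ofReal (V * R ^ n)) :
    ∫⁻ x, ENNReal.ofReal (exp (-‖x - x₀‖ ^ 2 / r ^ 2)) ∂μ
      ≤ ENNReal.ofReal (V * r ^ n * gaussianShellSum n) := by
  have hterm (k : ℕ) :
      ENNReal.ofReal (exp (-(k:ℝ) ^ 2)) * μ (Metric.ball x₀ (((k:ℝ) + 1) * r))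
        ≤ ENNReal.ofReal (V * r ^ n * (((k:ℝ) + 1) ^ n * exp (-(k:ℝ) ^ 2))) := by
    grw [hball _ (by positivity), ← ENNReal.ofReal_mul (exp_pos _).le]
    refine le_of_eq (congrArg ENNReal.ofReal ?_)
    rw [mul_pow]
    ring
  calc ∫⁻ x, ENNReal.ofReal (exp (-‖x - x₀‖ ^ 2 / r ^ 2)) ∂μ
      ≤ ∫⁻ x, ∑' k : ℕ, (Metric.ball x₀ (((k:ℝ) + 1) * r)).indicator
          (fun _ => ENNReal.ofReal (exp (-(k:ℝ) ^ 2))) x ∂μ :=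
        lintegral_mono (exp_neg_sq_le_tsum_indicator_ball x₀ hr)
    _ = ∑' k : ℕ, ENNReal.ofReal (exp (-(k:ℝ) ^ 2)) * μ (Metric.ball x₀ (((k:ℝ) + 1) * r)) := by
        rw [lintegral_tsum fun k => (aemeasurable_const.indicator measurableSet_ball)]
        simp only [lintegral_indicator_const measurableSet_ball]
    _ ≤ ∑' k : ℕ, ENNReal.ofReal (V * r ^ n * (((k:ℝ) + 1) ^ n * exp (-(k:ℝ) ^ 2))) :=
        ENNReal.tsum_le_tsum hterm
    _ = ENNReal.ofReal (V * r ^ n * gaussianShellSum n) := by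
        rw [← ENNReal.ofReal_tsum_of_nonneg (fun k => by positivity)
          ((summable_succ_pow_mul_exp_neg_sq n).mul_left _), tsum_mul_left, gaussianShellSum]

end BallsAndGaussians

lemma gaussianF_le_entropy (n : ℕ) (S : Set (EuclideanSpace ℝ (Fin (n+1))))
    (x₀ : EuclideanSpace ℝ (Fin (n+1))) {t : ℝ} (ht : 0 < t) :
    gaussianF n S x₀ t ≤ entropy n S :=
  le_iSup₂_of_le x₀ t (le_iSup_of_le ht le_rfl)

lemma measure_ball_le_gaussianF (n : ℕ) (S : Set (EuclideanSpace ℝ (Fin (n+1))))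
    (x₀ : EuclideanSpace ℝ (Fin (n+1))) {R : ℝ} (hR : 0 < R) :
    (μH[(n:ℝ)]).restrict S (Metric.ball x₀ R)
      ≤ ENNReal.ofReal (exp (1/4) * (4 * π) ^ ((n:ℝ)/2) * R ^ n) * gaussianF n S x₀ (R ^ 2) := by
  rw [mul_assoc (exp (1/4))]
  set A := (4 * π) ^ ((n:ℝ)/2) * R ^ n
  have hA : 0 < A := by positivity
  have hcancel :
      ENNReal.ofReal (exp (1/4) * A) * (ENNReal.ofReal A⁻¹ * ENNReal.ofReal (exp (-(1/4)))) = 1 := by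
    rw [← ENNReal.ofReal_mul (by positivity), ← ENNReal.ofReal_mul (by positivity), ← mul_assoc,
      mul_assoc (exp _), mul_inv_cancel₀ hA.ne', mul_one, ← exp_add]
    norm_num
  calc (μH[(n:ℝ)]).restrict S (Metric.ball x₀ R)
      = ENNReal.ofReal (exp (1/4) * A) * (ENNReal.ofReal A⁻¹ *
          (ENNReal.ofReal (exp (-(1/4))) * (μH[(n:ℝ)]).restrict S (Metric.ball x₀ R))) := by
        rw [← mul_assoc (ENNReal.ofReal A⁻¹), ← mul_assoc, hcancel, one_mul]
    _ ≤ ENNReal.ofReal (exp (1/4) * A) * gaussianF n S x₀ (R ^ 2) := by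
        rw [gaussianF, rpow_neg_half_mul_sq n (by positivity) hR.le]
        gcongr
        exact exp_neg_quarter_mul_measure_ball_le_lintegral x₀ _ hR

lemma gaussianF_le_of_measure_ball_le (n : ℕ) (S : Set (EuclideanSpace ℝ (Fin (n+1))))
    (x₀ : EuclideanSpace ℝ (Fin (n+1))) {V t : ℝ} (hV : 0 ≤ V) (ht : 0 < t)
    (hball : ∀ R : ℝ, 0 < R →
      (μH[(n:ℝ)]).restrict S (Metric.ball x₀ R) ≤ ENNReal.ofReal (V * R ^ n)) :
    gaussianF n S x₀ t ≤ ENNReal.ofReal (gaussianShellSum n / π ^ ((n:ℝ)/2) * V) := by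
  set r := √(4 * t)
  have hr : 0 < r := sqrt_pos.mpr (by positivity)
  have hr2 : r ^ 2 = 4 * t := sq_sqrt (by positivity)
  have hnormalize : (4 * π * t) ^ (-(n:ℝ)/2) = (π ^ ((n:ℝ)/2) * r ^ n)⁻¹ := by
    rw [show 4 * π * t = π * r ^ 2 by rw [hr2]; ring]
    exact rpow_neg_half_mul_sq n pi_pos.le hr.le
  calc gaussianF n S x₀ t
      = ENNReal.ofReal (π ^ ((n:ℝ)/2) * r ^ n)⁻¹ *
          ∫⁻ x in S, ENNReal.ofReal (exp (-‖x - x₀‖ ^ 2 / r ^ 2)) ∂μH[(n:ℝ)] := by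
        rw [gaussianF, hnormalize, hr2]
    _ ≤ ENNReal.ofReal (π ^ ((n:ℝ)/2) * r ^ n)⁻¹ *
          ENNReal.ofReal (V * r ^ n * gaussianShellSum n) := by
        gcongr
        exact lintegral_exp_neg_sq_le_of_measure_ball_le x₀ _ n hV hr hball
    _ = ENNReal.ofReal (gaussianShellSum n / π ^ ((n:ℝ)/2) * V) := by
        rw [← ENNReal.ofReal_mul (by positivity)]
        congr 1
        field_simp

theorem stmt10_general (n : ℕ) :
    (∀ S : Set (EuclideanSpace ℝ (Fin (n+1))), MeasurableSet S →
      ∀ x₀ : EuclideanSpace ℝ (Fin (n+1)), ∀ R : ℝ, 0 < R →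
        (μH[(n:ℝ)]).restrict S (Metric.ball x₀ R)
          ≤ ENNReal.ofReal (Real.exp (1/4) * (4 * π) ^ ((n:ℝ)/2) * R ^ n) * entropy n S) ∧
    (∃ C : ℝ, ∀ S : Set (EuclideanSpace ℝ (Fin (n+1))), MeasurableSet S →
      ∀ V : ℝ, 0 < V →
        (∀ x₀ : EuclideanSpace ℝ (Fin (n+1)), ∀ R : ℝ, 0 < R →
          (μH[(n:ℝ)]).restrict S (Metric.ball x₀ R) ≤ ENNReal.ofReal (V * R ^ n)) →
        entropy n S ≤ ENNReal.ofReal (C * V)) := by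
  refine ⟨fun S _ x₀ R hR => ?_, ⟨gaussianShellSum n / π ^ ((n:ℝ)/2), fun S _ V hV hball => ?_⟩⟩
  · grw [measure_ball_le_gaussianF n S x₀ hR, gaussianF_le_entropy n S x₀ (pow_pos hR 2)]
  · exact iSup₂_le fun x₀ t => iSup_le fun ht =>
      gaussianF_le_of_measure_ball_le n S x₀ hV.le ht (hball x₀)

/-- (i) The area of `Σ` in any ball of radius `R` is at most
`e^{1/4} (4π)^{n/2} λ(Σ) Rⁿ`; (ii) conversely there is a dimensional constant `C_n` such
that a uniform bound `μ_Σ(B_R(x₀)) ≤ V Rⁿ` on area ratios forces `λ(Σ) ≤ C_n V`. -/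
theorem stmt10 (n : ℕ) (hn : 1 ≤ n) :
    (∀ S : Set (EuclideanSpace ℝ (Fin (n+1))), MeasurableSet S →
      ∀ x₀ : EuclideanSpace ℝ (Fin (n+1)), ∀ R : ℝ, 0 < R →
        (μH[(n:ℝ)]).restrict S (Metric.ball x₀ R)
          ≤ ENNReal.ofReal (Real.exp (1/4) * (4 * π) ^ ((n:ℝ)/2) * R ^ n) * entropy n S) ∧
    (∃ C : ℝ, ∀ S : Set (EuclideanSpace ℝ (Fin (n+1))), MeasurableSet S →
      ∀ V : ℝ, 0 < V →
        (∀ x₀ : EuclideanSpace ℝ (Fin (n+1)), ∀ R : ℝ, 0 < R →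
          (μH[(n:ℝ)]).restrict S (Metric.ball x₀ R) ≤ ENNReal.ofReal (V * R ^ n)) →
        entropy n S ≤ ENNReal.ofReal (C * V)) :=
  stmt10_general n
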